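/- In the two-period Kyle game with binary true value v ∈ {0,1} fully revealed to the insider at time 0 (each with probability 1/2), insider actions E_X = {0,1}, noise demands E_Z = {−1,0,1} with ζ({−1}) = ζ({1}) = ε and ζ({0}) = 1 − 2ε, no Kyle equilibrium exists in which the insider plays a pure strategy, provided ε is sufficiently small. In particular, for the candidate pure strategy where the insider buys in both periods when v = 1 and never trades when v = 0, with associated rational prices S, the deviation of not trading in period 1 (and buying in period 2 when v = 1) yields expected profit 1/2 + O(ε), strictly exceeding the O(ε) profit of the candidate strategy. -/

import Mathlib

/-!
Rational pricing makes the market maker break even on the total order flow `y = x + z`, so the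
insider's expected profit `E[(v - S) x]` equals the noise traders' expected loss
`E[(S - v) z] = O(ε)`. Against this, a pure strategy either fails to separate the two values in
period 1, and then `y₁ = 1` is at least as likely under `v = 0`, so `S₁(1) ≤ 1/2` and buying at
once when `v = 1` earns about `1/4`; or it separates, and then `y₁ = 0` points to `v = 0`, so
`S₂(0, 1) ≤ 1/2` and waiting to buy in period 2 when `v = 1` earns about `1/4`. Either way some
deviation beats the equilibrium profit once `ε` is small.
-/

open Finset

/-- Noise distribution on `{-1, 0, 1}`: `ζ({-1}) = ζ({1}) = ε`, `ζ({0}) = 1 − 2ε`. -/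
noncomputable def zetaNoise (ε z : ℝ) : ℝ := if z = 0 then 1 - 2 * ε else ε

/-- A (behaviour) strategy of the insider in the two-period game: `a1 v x1` is
the probability of playing `x1` in period 1 given the true value `v`, and
`a2 v x1 z1 x2` the probability of playing `x2` in period 2 given the history. -/
def ValidStrategy (a1 : ℝ → ℝ → ℝ) (a2 : ℝ → ℝ → ℝ → ℝ → ℝ) : Prop :=
  (∀ v ∈ ({0, 1} : Finset ℝ),
    (∀ x1 ∈ ({0, 1} : Finset ℝ), 0 ≤ a1 v x1) ∧
    ∑ x1 ∈ ({0, 1} : Finset ℝ), a1 v x1 = 1) ∧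
  (∀ v ∈ ({0, 1} : Finset ℝ), ∀ x1 ∈ ({0, 1} : Finset ℝ),
    ∀ z1 ∈ ({-1, 0, 1} : Finset ℝ),
    (∀ x2 ∈ ({0, 1} : Finset ℝ), 0 ≤ a2 v x1 z1 x2) ∧
    ∑ x2 ∈ ({0, 1} : Finset ℝ), a2 v x1 z1 x2 = 1)

/-- The insider plays a pure strategy. -/
def PureStrategy (a1 : ℝ → ℝ → ℝ) (a2 : ℝ → ℝ → ℝ → ℝ → ℝ) : Prop :=
  ∀ v ∈ ({0, 1} : Finset ℝ), ∀ x1 ∈ ({0, 1} : Finset ℝ),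
    (a1 v x1 = 0 ∨ a1 v x1 = 1) ∧
    ∀ z1 ∈ ({-1, 0, 1} : Finset ℝ), ∀ x2 ∈ ({0, 1} : Finset ℝ),
      a2 v x1 z1 x2 = 0 ∨ a2 v x1 z1 x2 = 1

/-- Expected payoff of the insider in the two-period game. -/
noncomputable def payoff (ε : ℝ) (a1 : ℝ → ℝ → ℝ) (a2 : ℝ → ℝ → ℝ → ℝ → ℝ)
    (S1 : ℝ → ℝ) (S2 : ℝ → ℝ → ℝ) : ℝ :=
  ∑ v ∈ ({0, 1} : Finset ℝ), ∑ x1 ∈ ({0, 1} : Finset ℝ),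
    ∑ z1 ∈ ({-1, 0, 1} : Finset ℝ), ∑ x2 ∈ ({0, 1} : Finset ℝ),
      ∑ z2 ∈ ({-1, 0, 1} : Finset ℝ),
        (1 / 2) * a1 v x1 * zetaNoise ε z1 * a2 v x1 z1 x2 * zetaNoise ε z2 *
          ((v - S1 (x1 + z1)) * x1 + (v - S2 (x1 + z1) (x2 + z2)) * x2)

/-- Probability of observing total demand `y1` in period 1. -/
noncomputable def p1 (ε : ℝ) (a1 : ℝ → ℝ → ℝ) (y1 : ℝ) : ℝ :=
  ∑ v ∈ ({0, 1} : Finset ℝ), ∑ x1 ∈ ({0, 1} : Finset ℝ),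
    ∑ z1 ∈ ({-1, 0, 1} : Finset ℝ),
      if x1 + z1 = y1 then (1 / 2) * a1 v x1 * zetaNoise ε z1 else 0

/-- Expectation of the true value on the event `{y₁ = y1}`. -/
noncomputable def pv1 (ε : ℝ) (a1 : ℝ → ℝ → ℝ) (y1 : ℝ) : ℝ :=
  ∑ v ∈ ({0, 1} : Finset ℝ), ∑ x1 ∈ ({0, 1} : Finset ℝ),
    ∑ z1 ∈ ({-1, 0, 1} : Finset ℝ),
      if x1 + z1 = y1 then (1 / 2) * a1 v x1 * zetaNoise ε z1 * v else 0

/-- Probability of observing total demands `(y1, y2)`. -/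
noncomputable def p2 (ε : ℝ) (a1 : ℝ → ℝ → ℝ) (a2 : ℝ → ℝ → ℝ → ℝ → ℝ)
    (y1 y2 : ℝ) : ℝ :=
  ∑ v ∈ ({0, 1} : Finset ℝ), ∑ x1 ∈ ({0, 1} : Finset ℝ),
    ∑ z1 ∈ ({-1, 0, 1} : Finset ℝ), ∑ x2 ∈ ({0, 1} : Finset ℝ),
      ∑ z2 ∈ ({-1, 0, 1} : Finset ℝ),
        if x1 + z1 = y1 ∧ x2 + z2 = y2 then
          (1 / 2) * a1 v x1 * zetaNoise ε z1 * a2 v x1 z1 x2 * zetaNoise ε z2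
        else 0

/-- Expectation of the true value on the event `{(y₁,y₂) = (y1,y2)}`. -/
noncomputable def pv2 (ε : ℝ) (a1 : ℝ → ℝ → ℝ) (a2 : ℝ → ℝ → ℝ → ℝ → ℝ)
    (y1 y2 : ℝ) : ℝ :=
  ∑ v ∈ ({0, 1} : Finset ℝ), ∑ x1 ∈ ({0, 1} : Finset ℝ),
    ∑ z1 ∈ ({-1, 0, 1} : Finset ℝ), ∑ x2 ∈ ({0, 1} : Finset ℝ),
      ∑ z2 ∈ ({-1, 0, 1} : Finset ℝ),
        if x1 + z1 = y1 ∧ x2 + z2 = y2 then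
          (1 / 2) * a1 v x1 * zetaNoise ε z1 * a2 v x1 z1 x2 * zetaNoise ε z2 * v
        else 0

/-- Kyle equilibrium of the two-period game: insider optimality and rational
pricing in both periods. -/
def IsTwoPeriodKyleEquilibrium (ε : ℝ) (a1 : ℝ → ℝ → ℝ)
    (a2 : ℝ → ℝ → ℝ → ℝ → ℝ) (S1 : ℝ → ℝ) (S2 : ℝ → ℝ → ℝ) : Prop :=
  ValidStrategy a1 a2 ∧
  (∀ y1, 0 ≤ S1 y1 ∧ S1 y1 ≤ 1) ∧
  (∀ y1 y2, 0 ≤ S2 y1 y2 ∧ S2 y1 y2 ≤ 1) ∧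
  (∀ b1 b2, ValidStrategy b1 b2 → payoff ε b1 b2 S1 S2 ≤ payoff ε a1 a2 S1 S2) ∧
  (∀ y1, 0 < p1 ε a1 y1 → S1 y1 * p1 ε a1 y1 = pv1 ε a1 y1) ∧
  (∀ y1 y2, 0 < p2 ε a1 a2 y1 y2 →
    S2 y1 y2 * p2 ε a1 a2 y1 y2 = pv2 ε a1 a2 y1 y2)

lemma mem_Icc_of_mem_pair {v : ℝ} (hv : v ∈ ({0, 1} : Finset ℝ)) : v ∈ Set.Icc (0 : ℝ) 1 := by
  simp only [mem_insert, mem_singleton] at hv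
  rcases hv with rfl | rfl <;> norm_num

section Noise

variable {ε : ℝ}

lemma zetaNoise_nonneg (hε0 : 0 ≤ ε) (hε : ε ≤ 1 / 2) (z : ℝ) : 0 ≤ zetaNoise ε z := by
  unfold zetaNoise; split_ifs <;> linarith

lemma zetaNoise_le_one (hε0 : 0 ≤ ε) (hε : ε ≤ 1 / 2) (z : ℝ) : zetaNoise ε z ≤ 1 := by
  unfold zetaNoise; split_ifs <;> linarith

lemma sum_zetaNoise : ∑ z ∈ ({-1, 0, 1} : Finset ℝ), zetaNoise ε z = 1 := by
  norm_num [zetaNoise, sum_insert]; ring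

lemma abs_mul_zetaNoise_le (hε0 : 0 ≤ ε) {z : ℝ} (hz : z ∈ ({-1, 0, 1} : Finset ℝ)) :
    |z * zetaNoise ε z| ≤ ε := by
  simp only [mem_insert, mem_singleton] at hz
  rcases hz with rfl | rfl | rfl <;> simp [zetaNoise, abs_of_nonneg hε0, hε0]

end Noise

section Strategy

variable {ε : ℝ} {a1 : ℝ → ℝ → ℝ} {a2 : ℝ → ℝ → ℝ → ℝ → ℝ} {v x1 z1 x2 : ℝ}

lemma ValidStrategy.first_nonneg (h : ValidStrategy a1 a2) (hv : v ∈ ({0, 1} : Finset ℝ))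
    (hx1 : x1 ∈ ({0, 1} : Finset ℝ)) : 0 ≤ a1 v x1 :=
  (h.1 v hv).1 x1 hx1

lemma ValidStrategy.first_le_one (h : ValidStrategy a1 a2) (hv : v ∈ ({0, 1} : Finset ℝ))
    (hx1 : x1 ∈ ({0, 1} : Finset ℝ)) : a1 v x1 ≤ 1 :=
  (single_le_sum (h.1 v hv).1 hx1).trans_eq (h.1 v hv).2

lemma ValidStrategy.second_nonneg (h : ValidStrategy a1 a2) (hv : v ∈ ({0, 1} : Finset ℝ))
    (hx1 : x1 ∈ ({0, 1} : Finset ℝ)) (hz1 : z1 ∈ ({-1, 0, 1} : Finset ℝ))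
    (hx2 : x2 ∈ ({0, 1} : Finset ℝ)) : 0 ≤ a2 v x1 z1 x2 :=
  (h.2 v hv x1 hx1 z1 hz1).1 x2 hx2

lemma ValidStrategy.second_le_one (h : ValidStrategy a1 a2) (hv : v ∈ ({0, 1} : Finset ℝ))
    (hx1 : x1 ∈ ({0, 1} : Finset ℝ)) (hz1 : z1 ∈ ({-1, 0, 1} : Finset ℝ))
    (hx2 : x2 ∈ ({0, 1} : Finset ℝ)) : a2 v x1 z1 x2 ≤ 1 :=
  (single_le_sum (h.2 v hv x1 hx1 z1 hz1).1 hx2).trans_eq (h.2 v hv x1 hx1 z1 hz1).2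

lemma ValidStrategy.first_add_first (h : ValidStrategy a1 a2) (hv : v ∈ ({0, 1} : Finset ℝ)) :
    a1 v 0 + a1 v 1 = 1 := by
  simpa [sum_pair] using (h.1 v hv).2

lemma ValidStrategy.second_add_second (h : ValidStrategy a1 a2) (hv : v ∈ ({0, 1} : Finset ℝ))
    (hx1 : x1 ∈ ({0, 1} : Finset ℝ)) (hz1 : z1 ∈ ({-1, 0, 1} : Finset ℝ)) :
    a2 v x1 z1 0 + a2 v x1 z1 1 = 1 := by
  simpa [sum_pair] using (h.2 v hv x1 hx1 z1 hz1).2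

lemma ValidStrategy.weight₁_nonneg (h : ValidStrategy a1 a2) (hε0 : 0 ≤ ε)
    (hε : ε ≤ 1 / 2) (hv : v ∈ ({0, 1} : Finset ℝ)) (hx1 : x1 ∈ ({0, 1} : Finset ℝ)) (z1 : ℝ) :
    0 ≤ 1 / 2 * a1 v x1 * zetaNoise ε z1 :=
  mul_nonneg (mul_nonneg (by norm_num) (h.first_nonneg hv hx1)) (zetaNoise_nonneg hε0 hε z1)

lemma ValidStrategy.weight₂_nonneg (h : ValidStrategy a1 a2) (hε0 : 0 ≤ ε)
    (hε : ε ≤ 1 / 2) (hv : v ∈ ({0, 1} : Finset ℝ)) (hx1 : x1 ∈ ({0, 1} : Finset ℝ))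
    (hz1 : z1 ∈ ({-1, 0, 1} : Finset ℝ)) (hx2 : x2 ∈ ({0, 1} : Finset ℝ)) (z2 : ℝ) :
    0 ≤ 1 / 2 * a1 v x1 * zetaNoise ε z1 * a2 v x1 z1 x2 * zetaNoise ε z2 :=
  mul_nonneg (mul_nonneg (h.weight₁_nonneg hε0 hε hv hx1 z1) (h.second_nonneg hv hx1 hz1 hx2))
    (zetaNoise_nonneg hε0 hε z2)

end Strategy

noncomputable def expect₁ (ε : ℝ) (a1 : ℝ → ℝ → ℝ) (F : ℝ → ℝ → ℝ → ℝ) : ℝ :=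
  ∑ v ∈ ({0, 1} : Finset ℝ), ∑ x1 ∈ ({0, 1} : Finset ℝ), ∑ z1 ∈ ({-1, 0, 1} : Finset ℝ),
    1 / 2 * a1 v x1 * zetaNoise ε z1 * F v x1 z1

noncomputable def expect₂ (ε : ℝ) (a1 : ℝ → ℝ → ℝ) (a2 : ℝ → ℝ → ℝ → ℝ → ℝ)
    (F : ℝ → ℝ → ℝ → ℝ → ℝ → ℝ) : ℝ :=
  ∑ v ∈ ({0, 1} : Finset ℝ), ∑ x1 ∈ ({0, 1} : Finset ℝ), ∑ z1 ∈ ({-1, 0, 1} : Finset ℝ),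
    ∑ x2 ∈ ({0, 1} : Finset ℝ), ∑ z2 ∈ ({-1, 0, 1} : Finset ℝ),
      1 / 2 * a1 v x1 * zetaNoise ε z1 * a2 v x1 z1 x2 * zetaNoise ε z2 * F v x1 z1 x2 z2

section Expectation

variable {ε : ℝ} {a1 : ℝ → ℝ → ℝ} {a2 : ℝ → ℝ → ℝ → ℝ → ℝ}

lemma expect₂_add (F G : ℝ → ℝ → ℝ → ℝ → ℝ → ℝ) :
    expect₂ ε a1 a2 (fun v x1 z1 x2 z2 => F v x1 z1 x2 z2 + G v x1 z1 x2 z2) =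
      expect₂ ε a1 a2 F + expect₂ ε a1 a2 G := by
  simp only [expect₂, mul_add, sum_add_distrib]

lemma ValidStrategy.expect₂_eq_expect₁ (h : ValidStrategy a1 a2) (F : ℝ → ℝ → ℝ → ℝ) :
    expect₂ ε a1 a2 (fun v x1 z1 _ _ => F v x1 z1) = expect₁ ε a1 F := by
  refine sum_congr rfl fun v hv => sum_congr rfl fun x1 hx1 => sum_congr rfl fun z1 hz1 => ?_
  calc _ = 1 / 2 * a1 v x1 * zetaNoise ε z1 * F v x1 z1 *
        ((∑ x2 ∈ ({0, 1} : Finset ℝ), a2 v x1 z1 x2) *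
          ∑ z2 ∈ ({-1, 0, 1} : Finset ℝ), zetaNoise ε z2) := by
        rw [sum_mul_sum, mul_sum]
        refine sum_congr rfl fun _ _ => ?_
        rw [mul_sum]
        exact sum_congr rfl fun _ _ => by ring
    _ = _ := by rw [(h.2 v hv x1 hx1 z1 hz1).2, sum_zetaNoise, one_mul, mul_one]

lemma expect₁_value_sub_price_mul_demand (S1 : ℝ → ℝ) :
    expect₁ ε a1 (fun v x1 z1 => (v - S1 (x1 + z1)) * (x1 + z1)) =
      ∑ y ∈ ({-1, 0, 1, 2} : Finset ℝ), y * (pv1 ε a1 y - S1 y * p1 ε a1 y) := by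
  norm_num [expect₁, p1, pv1, sum_insert]
  ring

lemma expect₂_value_sub_price_mul_demand (S2 : ℝ → ℝ → ℝ) :
    expect₂ ε a1 a2 (fun v x1 z1 x2 z2 => (v - S2 (x1 + z1) (x2 + z2)) * (x2 + z2)) =
      ∑ y1 ∈ ({-1, 0, 1, 2} : Finset ℝ), ∑ y2 ∈ ({-1, 0, 1, 2} : Finset ℝ),
        y2 * (pv2 ε a1 a2 y1 y2 - S2 y1 y2 * p2 ε a1 a2 y1 y2) := by
  norm_num [expect₂, p2, pv2, sum_insert]
  ring

lemma mul_le_half_of_abs_le {a b c d m ε : ℝ} (ha : a ∈ Set.Icc (0 : ℝ) 1)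
    (hb : b ∈ Set.Icc (0 : ℝ) 1) (hc : c ∈ Set.Icc (0 : ℝ) 1) (hd : |d| ≤ 1) (hm : |m| ≤ ε) :
    1 / 2 * a * b * c * d * m ≤ 1 / 2 * ε := by
  obtain ⟨ha0, ha1⟩ := ha
  obtain ⟨hb0, hb1⟩ := hb
  obtain ⟨hc0, hc1⟩ := hc
  calc _ ≤ |1 / 2 * a * b * c * d * m| := le_abs_self _
    _ = 1 / 2 * a * b * c * |d| * |m| := by
        simp only [abs_mul, abs_of_nonneg ha0, abs_of_nonneg hb0, abs_of_nonneg hc0,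
          abs_of_pos (one_half_pos (α := ℝ))]
    _ ≤ 1 / 2 * 1 * 1 * 1 * 1 * ε := by gcongr
    _ = 1 / 2 * ε := by ring

lemma expect₂_noise_le (h : ValidStrategy a1 a2) (hε0 : 0 ≤ ε) (hε : ε ≤ 1 / 2)
    {S1 : ℝ → ℝ} {S2 : ℝ → ℝ → ℝ} (hS1 : ∀ y1, 0 ≤ S1 y1 ∧ S1 y1 ≤ 1)
    (hS2 : ∀ y1 y2, 0 ≤ S2 y1 y2 ∧ S2 y1 y2 ≤ 1) :
    expect₂ ε a1 a2 (fun v x1 z1 x2 z2 =>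
      (S1 (x1 + z1) - v) * z1 + (S2 (x1 + z1) (x2 + z2) - v) * z2) ≤ 72 * ε := by
  calc _ ≤ ∑ v ∈ ({0, 1} : Finset ℝ), ∑ x1 ∈ ({0, 1} : Finset ℝ),
        ∑ z1 ∈ ({-1, 0, 1} : Finset ℝ), ∑ x2 ∈ ({0, 1} : Finset ℝ),
          ∑ z2 ∈ ({-1, 0, 1} : Finset ℝ), ε := by
        unfold expect₂
        gcongr with v hv x1 hx1 z1 hz1 x2 hx2 z2 hz2
        have hS {s : ℝ} (hs : 0 ≤ s ∧ s ≤ 1) : |s - v| ≤ 1 := by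
          have := mem_Icc_of_mem_pair hv
          exact abs_sub_le_iff.2 ⟨by linarith [this.1, hs.2], by linarith [this.2, hs.1]⟩
        have ha1 : a1 v x1 ∈ Set.Icc (0 : ℝ) 1 := ⟨h.first_nonneg hv hx1, h.first_le_one hv hx1⟩
        have ha2 : a2 v x1 z1 x2 ∈ Set.Icc (0 : ℝ) 1 :=
          ⟨h.second_nonneg hv hx1 hz1 hx2, h.second_le_one hv hx1 hz1 hx2⟩
        have hζ (z : ℝ) : zetaNoise ε z ∈ Set.Icc (0 : ℝ) 1 :=
          ⟨zetaNoise_nonneg hε0 hε z, zetaNoise_le_one hε0 hε z⟩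
        calc _ = 1 / 2 * a1 v x1 * a2 v x1 z1 x2 * zetaNoise ε z2 * (S1 (x1 + z1) - v) *
                (z1 * zetaNoise ε z1) + 1 / 2 * a1 v x1 * zetaNoise ε z1 * a2 v x1 z1 x2 *
                (S2 (x1 + z1) (x2 + z2) - v) * (z2 * zetaNoise ε z2) := by ring
          _ ≤ 1 / 2 * ε + 1 / 2 * ε := add_le_add
              (mul_le_half_of_abs_le ha1 ha2 (hζ z2) (hS (hS1 _)) (abs_mul_zetaNoise_le hε0 hz1))
              (mul_le_half_of_abs_le ha1 (hζ z1) ha2 (hS (hS2 _ _)) (abs_mul_zetaNoise_le hε0 hz2))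
          _ = ε := by ring
    _ = 72 * ε := by norm_num [sum_insert]; ring

end Expectation

section Pricing

variable {ε : ℝ} {a1 : ℝ → ℝ → ℝ} {a2 : ℝ → ℝ → ℝ → ℝ → ℝ}

lemma ite_mul_mem_Icc (c : Prop) [Decidable c] {w v : ℝ} (hw : 0 ≤ w)
    (hv : v ∈ ({0, 1} : Finset ℝ)) :
    (if c then w * v else 0) ∈ Set.Icc 0 (if c then w else 0) := by
  obtain ⟨hv0, hv1⟩ := mem_Icc_of_mem_pair hv
  split_ifs
  exacts [⟨mul_nonneg hw hv0, mul_le_of_le_one_right hw hv1⟩, ⟨le_rfl, le_rfl⟩]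

lemma mul_eq_of_pos_imp {S p q : ℝ} (hq : q ∈ Set.Icc 0 p) (h : 0 < p → S * p = q) :
    S * p = q := by
  rcases (hq.1.trans hq.2).lt_or_eq with hp | hp
  · exact h hp
  · rw [← hp, mul_zero]
    exact le_antisymm hq.1 (hp ▸ hq.2)

lemma ValidStrategy.pv1_mem_Icc (h : ValidStrategy a1 a2) (hε0 : 0 ≤ ε) (hε : ε ≤ 1 / 2)
    (y : ℝ) : pv1 ε a1 y ∈ Set.Icc 0 (p1 ε a1 y) := by
  have leaf {v x1 z1 : ℝ} (hv : v ∈ ({0, 1} : Finset ℝ)) (hx1 : x1 ∈ ({0, 1} : Finset ℝ)) :=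
    ite_mul_mem_Icc (x1 + z1 = y) (h.weight₁_nonneg hε0 hε hv hx1 z1) hv
  exact ⟨sum_nonneg fun v hv => sum_nonneg fun x1 hx1 => sum_nonneg fun _ _ => (leaf hv hx1).1,
    sum_le_sum fun v hv => sum_le_sum fun x1 hx1 => sum_le_sum fun _ _ => (leaf hv hx1).2⟩

lemma ValidStrategy.pv2_mem_Icc (h : ValidStrategy a1 a2) (hε0 : 0 ≤ ε) (hε : ε ≤ 1 / 2)
    (y1 y2 : ℝ) : pv2 ε a1 a2 y1 y2 ∈ Set.Icc 0 (p2 ε a1 a2 y1 y2) := by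
  have leaf {v x1 z1 x2 z2 : ℝ} (hv : v ∈ ({0, 1} : Finset ℝ))
      (hx1 : x1 ∈ ({0, 1} : Finset ℝ)) (hz1 : z1 ∈ ({-1, 0, 1} : Finset ℝ))
      (hx2 : x2 ∈ ({0, 1} : Finset ℝ)) :=
    ite_mul_mem_Icc (x1 + z1 = y1 ∧ x2 + z2 = y2) (h.weight₂_nonneg hε0 hε hv hx1 hz1 hx2 z2) hv
  exact ⟨sum_nonneg fun v hv => sum_nonneg fun x1 hx1 => sum_nonneg fun z1 hz1 =>
      sum_nonneg fun x2 hx2 => sum_nonneg fun _ _ => (leaf hv hx1 hz1 hx2).1,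
    sum_le_sum fun v hv => sum_le_sum fun x1 hx1 => sum_le_sum fun z1 hz1 =>
      sum_le_sum fun x2 hx2 => sum_le_sum fun _ _ => (leaf hv hx1 hz1 hx2).2⟩

end Pricing

noncomputable def pureFirst (σ : ℝ → ℝ) : ℝ → ℝ → ℝ := fun v x1 => if x1 = σ v then 1 else 0

noncomputable def pureSecond (τ : ℝ → ℝ) : ℝ → ℝ → ℝ → ℝ → ℝ :=
  fun v _ _ x2 => if x2 = τ v then 1 else 0

section Deviation

variable {ε : ℝ} {S1 : ℝ → ℝ} {S2 : ℝ → ℝ → ℝ}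

lemma validStrategy_pure {σ τ : ℝ → ℝ} (hσ : ∀ v ∈ ({0, 1} : Finset ℝ), σ v ∈ ({0, 1} : Finset ℝ))
    (hτ : ∀ v ∈ ({0, 1} : Finset ℝ), τ v ∈ ({0, 1} : Finset ℝ)) :
    ValidStrategy (pureFirst σ) (pureSecond τ) := by
  refine ⟨fun v hv => ⟨fun x1 _ => ?_, ?_⟩, fun v hv _ _ _ _ => ⟨fun x2 _ => ?_, ?_⟩⟩
  · unfold pureFirst; split_ifs <;> norm_num
  · simp [pureFirst, sum_ite_eq', hσ v hv]
  · unfold pureSecond; split_ifs <;> norm_num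
  · simp [pureSecond, sum_ite_eq', hτ v hv]

lemma payoff_trade_first :
    payoff ε (pureFirst id) (pureSecond fun _ => 0) S1 S2 =
      1 / 2 * ∑ z1 ∈ ({-1, 0, 1} : Finset ℝ), zetaNoise ε z1 * (1 - S1 (1 + z1)) := by
  norm_num [payoff, pureFirst, pureSecond, sum_insert, zetaNoise]
  ring

lemma payoff_trade_second :
    payoff ε (pureFirst fun _ => 0) (pureSecond id) S1 S2 =
      1 / 2 * ∑ z1 ∈ ({-1, 0, 1} : Finset ℝ), ∑ z2 ∈ ({-1, 0, 1} : Finset ℝ),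
        zetaNoise ε z1 * zetaNoise ε z2 * (1 - S2 z1 (1 + z2)) := by
  norm_num [payoff, pureFirst, pureSecond, sum_insert, zetaNoise]
  ring

lemma le_payoff_trade_first (hε0 : 0 ≤ ε) (hε : ε ≤ 1 / 2) (hS1 : ∀ y1, S1 y1 ≤ 1) :
    1 / 2 * ((1 - 2 * ε) * (1 - S1 1)) ≤ payoff ε (pureFirst id) (pureSecond fun _ => 0) S1 S2 := by
  rw [payoff_trade_first]
  gcongr
  calc (1 - 2 * ε) * (1 - S1 1) = zetaNoise ε 0 * (1 - S1 (1 + 0)) := by simp [zetaNoise]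
    _ ≤ _ := single_le_sum (f := fun z1 => zetaNoise ε z1 * (1 - S1 (1 + z1)))
        (fun z1 _ => mul_nonneg (zetaNoise_nonneg hε0 hε z1) (sub_nonneg.2 (hS1 _))) (by simp)

lemma le_payoff_trade_second (hε0 : 0 ≤ ε) (hε : ε ≤ 1 / 2) (hS2 : ∀ y1 y2, S2 y1 y2 ≤ 1) :
    1 / 2 * ((1 - 2 * ε) ^ 2 * (1 - S2 0 1)) ≤
      payoff ε (pureFirst fun _ => 0) (pureSecond id) S1 S2 := by
  have hterm (z1 z2 : ℝ) : 0 ≤ zetaNoise ε z1 * zetaNoise ε z2 * (1 - S2 z1 (1 + z2)) :=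
    mul_nonneg (mul_nonneg (zetaNoise_nonneg hε0 hε z1) (zetaNoise_nonneg hε0 hε z2))
      (sub_nonneg.2 (hS2 _ _))
  rw [payoff_trade_second]
  gcongr
  calc (1 - 2 * ε) ^ 2 * (1 - S2 0 1) =
        zetaNoise ε 0 * zetaNoise ε 0 * (1 - S2 0 (1 + 0)) := by
          rw [add_zero, zetaNoise, if_pos rfl]; ring
    _ ≤ ∑ z2 ∈ ({-1, 0, 1} : Finset ℝ), zetaNoise ε 0 * zetaNoise ε z2 * (1 - S2 0 (1 + z2)) :=
        single_le_sum (fun z2 _ => hterm 0 z2) (by simp)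
    _ ≤ _ := single_le_sum (f := fun z1 => ∑ z2 ∈ ({-1, 0, 1} : Finset ℝ),
          zetaNoise ε z1 * zetaNoise ε z2 * (1 - S2 z1 (1 + z2)))
        (fun z1 _ => sum_nonneg fun z2 _ => hterm z1 z2) (by simp)

end Deviation

section Posterior

variable {ε : ℝ} {a1 : ℝ → ℝ → ℝ} {a2 : ℝ → ℝ → ℝ → ℝ → ℝ} {S1 : ℝ → ℝ} {S2 : ℝ → ℝ → ℝ}

lemma le_half_of_mul_eq {S p q r : ℝ} (hp : p = q + r) (hq : 0 ≤ q) (hqr : q ≤ r) (hr : 0 < r)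
    (h : 0 < p → S * p = q) : S ≤ 1 / 2 := by
  have hpos : 0 < p := hp ▸ add_pos_of_nonneg_of_pos hq hr
  refine le_of_mul_le_mul_right ?_ hpos
  linarith [h hpos]

lemma mul_add_mul_mem_Icc {α β : ℝ} (hα : 0 ≤ α) (hβ : 0 ≤ β) (hαβ : α + β = 1)
    (hε : ε ≤ 1 / 3) : α * ε + β * (1 - 2 * ε) ∈ Set.Icc ε (1 - 2 * ε) := by
  obtain rfl : α = 1 - β := by linarith
  constructor <;> nlinarith

lemma ValidStrategy.first_mix_mem_Icc (h : ValidStrategy a1 a2) (hε : ε ≤ 1 / 3) {v : ℝ}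
    (hv : v ∈ ({0, 1} : Finset ℝ)) : a1 v 0 * ε + a1 v 1 * (1 - 2 * ε) ∈ Set.Icc ε (1 - 2 * ε) :=
  mul_add_mul_mem_Icc (h.first_nonneg hv (by simp)) (h.first_nonneg hv (by simp))
    (h.first_add_first hv) hε

lemma ValidStrategy.second_mix_mem_Icc (h : ValidStrategy a1 a2) (hε : ε ≤ 1 / 3) {v x1 z1 : ℝ}
    (hv : v ∈ ({0, 1} : Finset ℝ)) (hx1 : x1 ∈ ({0, 1} : Finset ℝ))
    (hz1 : z1 ∈ ({-1, 0, 1} : Finset ℝ)) :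
    a2 v x1 z1 0 * ε + a2 v x1 z1 1 * (1 - 2 * ε) ∈ Set.Icc ε (1 - 2 * ε) :=
  mul_add_mul_mem_Icc (h.second_nonneg hv hx1 hz1 (by simp))
    (h.second_nonneg hv hx1 hz1 (by simp)) (h.second_add_second hv hx1 hz1) hε

lemma ValidStrategy.price₁_one_le_half (hV : ValidStrategy a1 a2) (hε0 : 0 < ε)
    (hε : ε ≤ 1 / 3) (hP1 : ∀ y1, 0 < p1 ε a1 y1 → S1 y1 * p1 ε a1 y1 = pv1 ε a1 y1)
    (hpool : a1 0 1 = 1 ∨ a1 1 1 = 0) : S1 1 ≤ 1 / 2 := by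
  have hpv : pv1 ε a1 1 = 1 / 2 * (a1 1 0 * ε + a1 1 1 * (1 - 2 * ε)) := by
    norm_num [pv1, sum_insert, zetaNoise]; ring
  have hp : p1 ε a1 1 = pv1 ε a1 1 + 1 / 2 * (a1 0 0 * ε + a1 0 1 * (1 - 2 * ε)) := by
    rw [hpv]; norm_num [p1, sum_insert, zetaNoise]; ring
  have hm0 := hV.first_mix_mem_Icc hε (v := 0) (by simp)
  have hm1 := hV.first_mix_mem_Icc hε (v := 1) (by simp)
  have hsum0 := hV.first_add_first (v := 0) (by simp)
  have hsum1 := hV.first_add_first (v := 1) (by simp)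
  refine le_half_of_mul_eq hp (by rw [hpv]; linarith [hm1.1]) ?_ (by linarith [hm0.1]) (hP1 1)
  rw [hpv]
  rcases hpool with h | h
  · obtain h0 : a1 0 0 = 0 := by linarith
    rw [h, h0]; linarith [hm1.2]
  · obtain h0 : a1 1 0 = 1 := by linarith
    rw [h, h0]; linarith [hm0.1]

lemma ValidStrategy.price₂_zero_one_le_half (hV : ValidStrategy a1 a2) (hε0 : 0 < ε)
    (hε : ε ≤ 1 / 3) (hP2 : ∀ y1 y2, 0 < p2 ε a1 a2 y1 y2 →
      S2 y1 y2 * p2 ε a1 a2 y1 y2 = pv2 ε a1 a2 y1 y2)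
    (h01 : a1 0 1 = 0) (h11 : a1 1 1 = 1) : S2 0 1 ≤ 1 / 2 := by
  have h00 : a1 0 0 = 1 := by linarith [hV.first_add_first (v := 0) (by simp)]
  have h10 : a1 1 0 = 0 := by linarith [hV.first_add_first (v := 1) (by simp)]
  have hpv : pv2 ε a1 a2 0 1 =
      1 / 2 * ε * (a2 1 1 (-1) 0 * ε + a2 1 1 (-1) 1 * (1 - 2 * ε)) := by
    norm_num [pv2, sum_insert, zetaNoise, h10, h11]; ring
  have hp : p2 ε a1 a2 0 1 = pv2 ε a1 a2 0 1 +
      1 / 2 * (1 - 2 * ε) * (a2 0 0 0 0 * ε + a2 0 0 0 1 * (1 - 2 * ε)) := by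
    rw [hpv]; norm_num [p2, sum_insert, zetaNoise, h00, h01, h10, h11]; ring
  have hm0 := hV.second_mix_mem_Icc hε (v := 0) (x1 := 0) (z1 := 0) (by simp) (by simp) (by simp)
  have hm1 := hV.second_mix_mem_Icc hε (v := 1) (x1 := 1) (z1 := -1) (by simp) (by simp) (by simp)
  refine le_half_of_mul_eq hp (by rw [hpv]; nlinarith [hm1.1]) ?_ (by nlinarith [hm0.1])
    (hP2 0 1)
  rw [hpv]
  nlinarith [hm0.1, hm1.2]

end Posterior

section Equilibrium

variable {ε : ℝ} {a1 : ℝ → ℝ → ℝ} {a2 : ℝ → ℝ → ℝ → ℝ → ℝ} {S1 : ℝ → ℝ} {S2 : ℝ → ℝ → ℝ}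

theorem IsTwoPeriodKyleEquilibrium.payoff_le (hE : IsTwoPeriodKyleEquilibrium ε a1 a2 S1 S2)
    (hε0 : 0 ≤ ε) (hε : ε ≤ 1 / 2) : payoff ε a1 a2 S1 S2 ≤ 72 * ε := by
  obtain ⟨hV, hS1, hS2, -, hP1, hP2⟩ := hE
  have hsplit : payoff ε a1 a2 S1 S2 =
      expect₂ ε a1 a2 (fun v x1 z1 _ _ => (v - S1 (x1 + z1)) * (x1 + z1)) +
      expect₂ ε a1 a2 (fun v x1 z1 x2 z2 => (v - S2 (x1 + z1) (x2 + z2)) * (x2 + z2)) +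
      expect₂ ε a1 a2 (fun v x1 z1 x2 z2 =>
        (S1 (x1 + z1) - v) * z1 + (S2 (x1 + z1) (x2 + z2) - v) * z2) := by
    -- each order `xₜ` is split as `yₜ - zₜ`
    rw [← expect₂_add, ← expect₂_add]
    show expect₂ ε a1 a2 _ = _
    congr 1
    funext v x1 z1 x2 z2
    ring
  have hfirst : expect₂ ε a1 a2 (fun v x1 z1 _ _ => (v - S1 (x1 + z1)) * (x1 + z1)) = 0 := by
    rw [hV.expect₂_eq_expect₁, expect₁_value_sub_price_mul_demand]
    refine sum_eq_zero fun y _ => ?_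
    rw [mul_eq_of_pos_imp (hV.pv1_mem_Icc hε0 hε y) (hP1 y), sub_self, mul_zero]
  have hsecond : expect₂ ε a1 a2
      (fun v x1 z1 x2 z2 => (v - S2 (x1 + z1) (x2 + z2)) * (x2 + z2)) = 0 := by
    rw [expect₂_value_sub_price_mul_demand]
    refine sum_eq_zero fun y1 _ => sum_eq_zero fun y2 _ => ?_
    rw [mul_eq_of_pos_imp (hV.pv2_mem_Icc hε0 hε y1 y2) (hP2 y1 y2), sub_self, mul_zero]
  rw [hsplit, hfirst, hsecond, zero_add, zero_add]
  exact expect₂_noise_le hV hε0 hε hS1 hS2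

theorem IsTwoPeriodKyleEquilibrium.le_payoff (hE : IsTwoPeriodKyleEquilibrium ε a1 a2 S1 S2)
    (hpure : PureStrategy a1 a2) (hε0 : 0 < ε) (hε : ε ≤ 1 / 3) :
    (1 - 2 * ε) ^ 2 / 4 ≤ payoff ε a1 a2 S1 S2 := by
  obtain ⟨hV, hS1, hS2, hopt, hP1, hP2⟩ := hE
  have hid : ∀ v ∈ ({0, 1} : Finset ℝ), id v ∈ ({0, 1} : Finset ℝ) := fun _ hv => hv
  have hzero : ∀ v ∈ ({0, 1} : Finset ℝ), (fun _ => (0 : ℝ)) v ∈ ({0, 1} : Finset ℝ) :=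
    fun _ _ => by simp
  by_cases hsep : a1 0 1 = 0 ∧ a1 1 1 = 1
  · have hS := hV.price₂_zero_one_le_half hε0 hε hP2 hsep.1 hsep.2
    calc (1 - 2 * ε) ^ 2 / 4 ≤ 1 / 2 * ((1 - 2 * ε) ^ 2 * (1 - S2 0 1)) := by
          nlinarith [sq_nonneg (1 - 2 * ε)]
      _ ≤ _ := le_payoff_trade_second hε0.le (by linarith) fun y1 y2 => (hS2 y1 y2).2
      _ ≤ _ := hopt _ _ (validStrategy_pure hzero hid)
  · have hpool : a1 0 1 = 1 ∨ a1 1 1 = 0 := by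
      rcases (hpure 0 (by simp) 1 (by simp)).1 with h0 | h0 <;>
        rcases (hpure 1 (by simp) 1 (by simp)).1 with h1 | h1 <;> tauto
    have hS := hV.price₁_one_le_half hε0 hε hP1 hpool
    calc (1 - 2 * ε) ^ 2 / 4 ≤ 1 / 2 * ((1 - 2 * ε) * (1 - S1 1)) := by nlinarith
      _ ≤ _ := le_payoff_trade_first hε0.le (by linarith) fun y1 => (hS1 y1).2
      _ ≤ _ := hopt _ _ (validStrategy_pure hid hzero)

end Equilibrium

/-- For sufficiently small noise intensity `ε > 0`, the two-period Kyle game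
with binary fully-revealed true value admits no equilibrium in which the
insider plays a pure strategy. -/
theorem no_pure_equilibrium_two_period :
    ∃ ε0 > (0 : ℝ), ∀ ε : ℝ, 0 < ε → ε < ε0 →
      ¬ ∃ (a1 : ℝ → ℝ → ℝ) (a2 : ℝ → ℝ → ℝ → ℝ → ℝ)
          (S1 : ℝ → ℝ) (S2 : ℝ → ℝ → ℝ),
        IsTwoPeriodKyleEquilibrium ε a1 a2 S1 S2 ∧ PureStrategy a1 a2 := by
  refine ⟨1 / 400, by norm_num, fun ε hε0 hε ⟨a1, a2, S1, S2, hE, hpure⟩ => ?_⟩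
  have hlow := hE.le_payoff hpure hε0 (by linarith)
  have hup := hE.payoff_le hε0.le (by linarith)
  nlinarith
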